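/- arXiv:2305.04357 — 2 statements merged into one kernel-verified Lean document; each statement's English description precedes it below -/
import Mathlib

section
/- Shortness of the sup-JSD distance under stochastic pre-composition: for column-stochastic matrices P, Q both indexed by Y×X and any column-stochastic matrix G indexed by X×W (all index types finite and nonempty), D(P·G, Q·G) ≤ D(P,Q), where · denotes matrix multiplication. -/
open Finset Matrix

noncomputable section

/-- A probability vector on a finite type: nonnegative entries summing to 1. -/
def IsProbVec {X : Type*} [Fintype X] (p : X → ℝ) : Prop :=
  (∀ x, 0 ≤ p x) ∧ ∑ x, p x = 1

/-- Kullback–Leibler divergence, with the convention that terms with `p x = 0`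
contribute `0`. -/
noncomputable def KL {X : Type*} [Fintype X] (p q : X → ℝ) : ℝ :=
  ∑ x, if p x = 0 then 0 else p x * Real.log (p x / q x)

/-- Jensen–Shannon distance. -/
noncomputable def JSD {X : Type*} [Fintype X] (p q : X → ℝ) : ℝ :=
  Real.sqrt ((1 / 2) * KL p (fun x => (p x + q x) / 2)
    + (1 / 2) * KL q (fun x => (p x + q x) / 2))

/-- A column-stochastic matrix: nonnegative entries, every column sums to 1. -/
def IsColStoch {Y X : Type*} [Fintype Y] [Fintype X] (M : Matrix Y X ℝ) : Prop :=
  (∀ y x, 0 ≤ M y x) ∧ ∀ x, ∑ y, M y x = 1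

/-- The sup-JSD distance between two matrices of the same shape:
the maximum over columns of the JSD between corresponding columns. -/
noncomputable def supJSD {Y X : Type*} [Fintype Y] [Fintype X] [Nonempty X]
    (M N : Matrix Y X ℝ) : ℝ :=
  Finset.univ.sup' Finset.univ_nonempty fun x => JSD (fun y => M y x) (fun y => N y x)

/-- An abstraction matrix: entries in {0,1}, every column contains exactly one 1,
and every row contains at least one 1. -/
def IsAbsMatrix {N M : Type*} [Fintype N] [Fintype M] (α : Matrix N M ℝ) : Prop :=
  (∀ j i, α j i = 0 ∨ α j i = 1) ∧ (∀ i, ∃! j, α j i = 1) ∧ (∀ j, ∃ i, α j i = 1)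

/-- The pseudo-inverse `α⁺ = αᵀ·(α·αᵀ)⁻¹` of an abstraction matrix. -/
noncomputable def pinv {N M : Type*} [Fintype N] [Fintype M] [DecidableEq N]
    (α : Matrix N M ℝ) : Matrix M N ℝ :=
  αᵀ * (α * αᵀ)⁻¹

/-!
The column `w` of `P * G` is the `G(·, w)`-mixture of the columns of `P`, and likewise for `Q`.
The squared Jensen–Shannon distance is jointly convex, because KL divergence is (log-sum
inequality), so the squared distance between the mixed columns is at most the `G(·, w)`-average
of the squared distances between the columns of `P` and `Q`, hence at most their maximum.
-/

/-- The tangent-line bound `log t ≤ t - 1` at `t = b c / a`. -/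
lemma Real.mul_log_add_sub_mul_le_mul_log_div {a b c : ℝ} (ha : 0 ≤ a) (hb : 0 ≤ b)
    (hc : 0 < c) (hab : b = 0 → a = 0) :
    a * Real.log c + a - b * c ≤ a * Real.log (a / b) := by
  rcases ha.eq_or_lt with rfl | ha
  · simpa using mul_nonneg hb hc.le
  have hb : 0 < b := hb.lt_of_ne fun h => ha.ne' (hab h.symm)
  have key := Real.log_le_sub_one_of_pos (div_pos (mul_pos hb hc) ha)
  rw [Real.log_div (mul_pos hb hc).ne' ha.ne', Real.log_mul hb.ne' hc.ne'] at key
  rw [Real.log_div ha.ne' hb.ne']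
  have := mul_le_mul_of_nonneg_left key ha.le
  rw [mul_sub a (b * c / a) 1, mul_div_cancel₀ _ ha.ne'] at this
  linarith

/-- The log-sum inequality. -/
theorem Real.sum_mul_log_div_sum_le {ι : Type*} (s : Finset ι) {a b : ι → ℝ}
    (ha : ∀ i ∈ s, 0 ≤ a i) (hb : ∀ i ∈ s, 0 ≤ b i) (hab : ∀ i ∈ s, b i = 0 → a i = 0) :
    (∑ i ∈ s, a i) * Real.log ((∑ i ∈ s, a i) / ∑ i ∈ s, b i) ≤
      ∑ i ∈ s, a i * Real.log (a i / b i) := by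
  set A := ∑ i ∈ s, a i
  set B := ∑ i ∈ s, b i
  rcases (sum_nonneg ha).eq_or_lt with hA | hA
  · have ha0 : ∀ i ∈ s, a i = 0 := (sum_eq_zero_iff_of_nonneg ha).1 hA.symm
    rw [show A = 0 from hA.symm, zero_mul, sum_eq_zero fun i hi => by rw [ha0 i hi, zero_mul]]
  have hB : B ≠ 0 := fun hB => hA.ne' <| sum_eq_zero fun i hi =>
    hab i hi ((sum_eq_zero_iff_of_nonneg hb).1 hB i hi)
  calc A * Real.log (A / B) = ∑ i ∈ s, (a i * Real.log (A / B) + a i - b i * (A / B)) := by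
        rw [sum_sub_distrib, sum_add_distrib, ← sum_mul, ← sum_mul, mul_div_cancel₀ _ hB]
        ring
    _ ≤ ∑ i ∈ s, a i * Real.log (a i / b i) := sum_le_sum fun i hi =>
        Real.mul_log_add_sub_mul_le_mul_log_div (ha i hi) (hb i hi)
          (div_pos hA ((sum_nonneg hb).lt_of_ne' hB)) (hab i hi)

section Divergences

variable {X : Type*} [Fintype X]

/-- The convention for `p x = 0` in `KL` is the one `0 * _ = 0` already gives. -/
lemma KL_eq_sum (p q : X → ℝ) : KL p q = ∑ x, p x * Real.log (p x / q x) :=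
  sum_congr rfl fun x _ => by split_ifs with h <;> simp [h]

theorem KL_sum_smul_le {ι : Type*} (s : Finset ι) {g : ι → ℝ} (hg : ∀ i ∈ s, 0 ≤ g i)
    {p m : ι → X → ℝ} (hp : ∀ i ∈ s, ∀ x, 0 ≤ p i x) (hm : ∀ i ∈ s, ∀ x, 0 ≤ m i x)
    (hpm : ∀ i ∈ s, ∀ x, m i x = 0 → p i x = 0) :
    KL (∑ i ∈ s, g i • p i) (∑ i ∈ s, g i • m i) ≤ ∑ i ∈ s, g i * KL (p i) (m i) := by
  simp only [KL_eq_sum, mul_sum]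
  rw [sum_comm]
  refine sum_le_sum fun x _ => ?_
  simp only [Finset.sum_apply, Pi.smul_apply, smul_eq_mul]
  refine (Real.sum_mul_log_div_sum_le s (fun i hi => mul_nonneg (hg i hi) (hp i hi x))
    (fun i hi => mul_nonneg (hg i hi) (hm i hi x)) fun i hi h => ?_).trans_eq
    (sum_congr rfl fun i _ => ?_)
  · rcases mul_eq_zero.1 h with h | h <;> simp [h, hpm i hi x]
  · rcases eq_or_ne (g i) 0 with h | h
    · simp [h]
    · rw [mul_div_mul_left _ _ h, mul_assoc]

def jsDiv (p q : X → ℝ) : ℝ :=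
  (1 / 2) * KL p (fun x => (p x + q x) / 2) + (1 / 2) * KL q (fun x => (p x + q x) / 2)

theorem jsDiv_sum_smul_le {ι : Type*} (s : Finset ι) {g : ι → ℝ} (hg : ∀ i ∈ s, 0 ≤ g i)
    {p q : ι → X → ℝ} (hp : ∀ i ∈ s, ∀ x, 0 ≤ p i x) (hq : ∀ i ∈ s, ∀ x, 0 ≤ q i x) :
    jsDiv (∑ i ∈ s, g i • p i) (∑ i ∈ s, g i • q i) ≤ ∑ i ∈ s, g i * jsDiv (p i) (q i) := by
  set m : ι → X → ℝ := fun i x => (p i x + q i x) / 2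
  have hmix : (fun x => ((∑ i ∈ s, g i • p i) x + (∑ i ∈ s, g i • q i) x) / 2) =
      ∑ i ∈ s, g i • m i := by
    ext x
    simp only [Finset.sum_apply, Pi.smul_apply, smul_eq_mul, ← sum_add_distrib, sum_div, m]
    exact sum_congr rfl fun i _ => by ring
  have hm : ∀ i ∈ s, ∀ x, 0 ≤ m i x := fun i hi x => by
    have := hp i hi x; have := hq i hi x; positivity
  have hpm : ∀ i ∈ s, ∀ x, m i x = 0 → p i x = 0 := fun i hi x h => by
    have := hp i hi x; have := hq i hi x; simp only [m] at h; linarith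
  have hqm : ∀ i ∈ s, ∀ x, m i x = 0 → q i x = 0 := fun i hi x h => by
    have := hp i hi x; have := hq i hi x; simp only [m] at h; linarith
  have hKLp := KL_sum_smul_le s hg hp hm hpm
  have hKLq := KL_sum_smul_le s hg hq hm hqm
  calc jsDiv (∑ i ∈ s, g i • p i) (∑ i ∈ s, g i • q i)
      = (1 / 2) * KL (∑ i ∈ s, g i • p i) (∑ i ∈ s, g i • m i)
        + (1 / 2) * KL (∑ i ∈ s, g i • q i) (∑ i ∈ s, g i • m i) := by
        rw [jsDiv, hmix]
    _ ≤ (1 / 2) * ∑ i ∈ s, g i * KL (p i) (m i) + (1 / 2) * ∑ i ∈ s, g i * KL (q i) (m i) := by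
        linarith
    _ = ∑ i ∈ s, g i * jsDiv (p i) (q i) := by
        simp only [mul_sum, ← sum_add_distrib, jsDiv]
        exact sum_congr rfl fun i _ => by ring

theorem JSD_sum_smul_le_sup' {ι : Type*} [Fintype ι] [Nonempty ι] {g : ι → ℝ}
    (hg : ∀ i, 0 ≤ g i) (hg₁ : ∑ i, g i = 1)
    {p q : ι → X → ℝ} (hp : ∀ i x, 0 ≤ p i x) (hq : ∀ i x, 0 ≤ q i x) :
    JSD (∑ i, g i • p i) (∑ i, g i • q i) ≤
      univ.sup' univ_nonempty fun i => JSD (p i) (q i) := by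
  have havg : ∑ i, g i * jsDiv (p i) (q i) ≤ univ.sup' univ_nonempty fun i => jsDiv (p i) (q i) :=
    (univ.centerMass_eq_of_sum_1 _ hg₁).symm.trans_le
      (centerMass_le_sup (fun i _ => hg i) (hg₁ ▸ one_pos))
  calc JSD (∑ i, g i • p i) (∑ i, g i • q i)
      ≤ Real.sqrt (univ.sup' univ_nonempty fun i => jsDiv (p i) (q i)) :=
        Real.sqrt_le_sqrt <| (jsDiv_sum_smul_le univ (fun i _ => hg i)
          (fun i _ => hp i) fun i _ => hq i).trans havg
    _ = univ.sup' univ_nonempty fun i => JSD (p i) (q i) :=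
        apply_sup'_eq_sup'_comp _ _ fun _ _ => Real.sqrt_monotone.map_sup _ _

end Divergences

lemma Matrix.col_mul_eq_sum_smul {R Y X W : Type*} [CommSemiring R] [Fintype X]
    (A : Matrix Y X R) (B : Matrix X W R) (w : W) : (fun y => (A * B) y w) = ∑ x, B x w • fun y => A y x := by
  ext y
  simp [mul_apply, mul_comm]

theorem supJSD_shortness_pre_general {W X Y : Type*}
    [Fintype W] [Nonempty W] [Fintype X] [Nonempty X] [Fintype Y]
    (P Q : Matrix Y X ℝ) (G : Matrix X W ℝ)
    (hP : IsColStoch P) (hQ : IsColStoch Q) (hG : IsColStoch G) :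
    supJSD (P * G) (Q * G) ≤ supJSD P Q := by
  refine sup'_le _ _ fun w _ => ?_
  rw [col_mul_eq_sum_smul, col_mul_eq_sum_smul]
  exact JSD_sum_smul_le_sup' (fun x => hG.1 x w) (hG.2 w) (fun x y => hP.1 y x)
    fun x y => hQ.1 y x

theorem supJSD_shortness_pre {W X Y : Type*}
    [Fintype W] [Nonempty W] [Fintype X] [Nonempty X] [Fintype Y] [Nonempty Y]
    (P Q : Matrix Y X ℝ) (G : Matrix X W ℝ)
    (hP : IsColStoch P) (hQ : IsColStoch Q) (hG : IsColStoch G) :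
    supJSD (P * G) (Q * G) ≤ supJSD P Q :=
  supJSD_shortness_pre_general P Q G hP hQ hG
end
end

section
/- Triangle inequality for the interventional superresolution consistency (ISC) error under composition of abstractions: D(μ·α_X⁺·β_X⁺, α_Y⁺·β_Y⁺·μ'') ≤ D(μ·α_X⁺, α_Y⁺·μ') + D(μ'·β_X⁺, β_Y⁺·μ''), where γ⁺ = γᵀ·(γ·γᵀ)⁻¹ denotes the pseudo-inverse of an abstraction matrix γ. -/
open Finset Matrix

noncomputable section

/-!
Compare both sides through the intermediate matrix `α_Y⁺ μ' β_X⁺`. Squared, `JSD p q` is a sum of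
coordinate terms `jsTerm (p y) (q y)`, each jointly convex and positively homogeneous (log-sum
inequality). Hence right multiplication by the column-stochastic `β_X⁺`, which averages columns,
cannot increase the sup-JSD distance, while `α_Y⁺` spreads coordinate `j` uniformly over its fibre
and so, by homogeneity, preserves `JSD` exactly. What remains is the triangle inequality for `JSD`.

By Minkowski's inequality that reduces to the scalar inequality
`√(jsTerm a c) ≤ √(jsTerm a b) + √(jsTerm b c)`. For `0 < a ≤ b ≤ c`, the map
`t ↦ √(jsTerm b t) - √(jsTerm a t)` is nondecreasing on `[b, ∞)`: its derivative is a quarter of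
`R b t - R a t`, where `R x t = (log t - log ((x + t) / 2)) / √(jsTerm x t)` is increasing in `x`,
which boils down to `(1 - u) log (1 - u) + (1 + u) log (1 + u) ≤ -log (1 - u) log (1 + u)` on
`[0, 1)`. The other orderings follow from the monotonicity of `jsTerm` off the diagonal, and
vanishing arguments by continuity.
-/

open Real Set Filter Topology

def jsTerm (a b : ℝ) : ℝ := negMulLog ((a + b) / 2) - (negMulLog a + negMulLog b) / 2

lemma jsTerm_comm (a b : ℝ) : jsTerm a b = jsTerm b a := by
  rw [jsTerm, jsTerm, add_comm a, add_comm (negMulLog a)]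

@[simp] lemma jsTerm_self (a : ℝ) : jsTerm a a = 0 := by
  simp only [jsTerm, add_self_div_two, sub_self]

lemma jsTerm_mul (c a b : ℝ) : jsTerm (c * a) (c * b) = c * jsTerm a b := by
  rw [jsTerm, jsTerm, ← mul_add, mul_div_assoc, negMulLog_mul, negMulLog_mul, negMulLog_mul]
  ring

lemma jsTerm_pos {a b : ℝ} (ha : 0 ≤ a) (hb : 0 ≤ b) (hab : a ≠ b) : 0 < jsTerm a b := by
  have h := strictConcaveOn_negMulLog.2 (mem_Ici.2 ha) (mem_Ici.2 hb) hab
    (by norm_num : (0 : ℝ) < 1 / 2) (by norm_num : (0 : ℝ) < 1 / 2) (by norm_num)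
  simp only [smul_eq_mul] at h
  rw [show (1 / 2 : ℝ) * a + 1 / 2 * b = (a + b) / 2 by ring] at h
  rw [jsTerm]
  linarith

lemma jsTerm_nonneg {a b : ℝ} (ha : 0 ≤ a) (hb : 0 ≤ b) : 0 ≤ jsTerm a b := by
  rcases eq_or_ne a b with rfl | hab
  · rw [jsTerm_self]
  · exact (jsTerm_pos ha hb hab).le

@[fun_prop]
lemma Continuous.jsTerm {α : Type*} [TopologicalSpace α] {f g : α → ℝ} (hf : Continuous f)
    (hg : Continuous g) : Continuous fun x => jsTerm (f x) (g x) := by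
  unfold _root_.jsTerm; fun_prop

lemma hasDerivAt_jsTerm_right {a t : ℝ} (ht : t ≠ 0) (hat : a + t ≠ 0) :
    HasDerivAt (jsTerm a) ((log t - log ((a + t) / 2)) / 2) t := by
  have hmix : HasDerivAt (fun s => negMulLog ((a + s) / 2))
      ((-log ((a + t) / 2) - 1) * (1 / 2)) t :=
    (hasDerivAt_negMulLog (by positivity)).comp t (((hasDerivAt_id t).const_add a).div_const 2)
  refine (hmix.sub (((hasDerivAt_negMulLog ht).const_add (negMulLog a)).div_const 2)).congr_deriv ?_
  ring

lemma hasDerivAt_jsTerm_left {x t : ℝ} (hx : x ≠ 0) (hxt : x + t ≠ 0) :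
    HasDerivAt (fun y => jsTerm y t) ((log x - log ((x + t) / 2)) / 2) x := by
  simp_rw [jsTerm_comm _ t]
  simpa only [add_comm t] using hasDerivAt_jsTerm_right (a := t) hx (by rwa [add_comm])

lemma jsTerm_monotoneOn_right {a : ℝ} (ha : 0 ≤ a) : MonotoneOn (jsTerm a) (Ici a) := by
  refine monotoneOn_of_hasDerivWithinAt_nonneg (f' := fun t => (log t - log ((a + t) / 2)) / 2)
    (convex_Ici a) (by fun_prop) (fun t ht => ?_) (fun t ht => ?_) <;>
    rw [interior_Ici, Set.mem_Ioi] at ht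
  · exact (hasDerivAt_jsTerm_right (by linarith) (by linarith)).hasDerivWithinAt
  · have := log_le_log (by linarith) (show (a + t) / 2 ≤ t by linarith)
    linarith

lemma jsTerm_antitoneOn_right {a : ℝ} : AntitoneOn (jsTerm a) (Icc 0 a) := by
  refine antitoneOn_of_hasDerivWithinAt_nonpos (f' := fun t => (log t - log ((a + t) / 2)) / 2)
    (convex_Icc 0 a) (by fun_prop) (fun t ht => ?_) (fun t ht => ?_) <;>
    rw [interior_Icc, Set.mem_Ioo] at ht
  · exact (hasDerivAt_jsTerm_right (by linarith) (by linarith)).hasDerivWithinAt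
  · have := log_le_log ht.1 (show t ≤ (a + t) / 2 by linarith)
    linarith

lemma two_mul_jsTerm_one_sub_one_add (u : ℝ) :
    2 * jsTerm (1 - u) (1 + u) = (1 - u) * log (1 - u) + (1 + u) * log (1 + u) := by
  rw [jsTerm, show (1 - u + (1 + u)) / 2 = 1 by ring, negMulLog_one, negMulLog, negMulLog]
  ring

lemma two_mul_jsTerm_one_sub_one_add_le {u : ℝ} (hu₀ : 0 ≤ u) (hu₁ : u < 1) :
    2 * jsTerm (1 - u) (1 + u) ≤ -log (1 - u) * log (1 + u) := by
  let g : ℝ → ℝ := fun v => (1 - v) * log (1 - v) + (1 + v) * log (1 + v)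
  let Φ : ℝ → ℝ := fun v => -log (1 - v) * log (1 + v) - g v
  have hΦ : ∀ v ∈ Ico (0 : ℝ) 1, HasDerivAt Φ (v * g v / ((1 - v) * (1 + v))) v := by
    intro v ⟨hv₀, hv₁⟩
    have h₁ : 1 - v ≠ 0 := by linarith
    have h₂ : 1 + v ≠ 0 := by linarith
    have hsub : HasDerivAt (fun v => 1 - v) (-1) v := by
      simpa using (hasDerivAt_id v).const_sub 1
    have hadd : HasDerivAt (fun v => 1 + v) 1 v := by
      simpa using (hasDerivAt_id v).const_add 1
    have hlsub := hsub.log h₁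
    have hladd := hadd.log h₂
    refine ((hlsub.neg.mul hladd).sub ((hsub.mul hlsub).add (hadd.mul hladd))).congr_deriv ?_
    simp only [Pi.neg_apply, g]
    field_simp
    ring
  have hmono : MonotoneOn Φ (Ico 0 1) := by
    refine monotoneOn_of_hasDerivWithinAt_nonneg (f' := fun v => v * g v / ((1 - v) * (1 + v)))
      (convex_Ico 0 1)
      (fun v hv => (hΦ v hv).continuousAt.continuousWithinAt) (fun v hv => ?_) (fun v hv => ?_)
      <;> rw [interior_Ico] at hv
    · exact (hΦ v (Ioo_subset_Ico_self hv)).hasDerivWithinAt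
    · have hg : 0 ≤ g v := by
        have := jsTerm_nonneg (a := 1 - v) (b := 1 + v) (by linarith [hv.2]) (by linarith [hv.1])
        linarith [two_mul_jsTerm_one_sub_one_add v]
      exact div_nonneg (mul_nonneg hv.1.le hg)
        (mul_pos (by linarith [hv.2]) (by linarith [hv.1])).le
  have := hmono (left_mem_Ico.2 one_pos) ⟨hu₀, hu₁⟩ hu₀
  simp only [Φ, g, sub_zero, add_zero, log_one, neg_zero, mul_zero, sub_self] at this
  rw [two_mul_jsTerm_one_sub_one_add]
  linarith

lemma four_mul_jsTerm_le {x t : ℝ} (hx : 0 < x) (hxt : x ≤ t) :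
    4 * jsTerm x t ≤ (x + t) * ((log ((x + t) / 2) - log x) * (log t - log ((x + t) / 2))) := by
  set m := (x + t) / 2
  set u := (t - x) / (x + t)
  have hsum : 0 < x + t := by linarith
  have hm : 0 < m := half_pos hsum
  have hx_eq : x = m * (1 - u) := by simp only [m, u]; field_simp; ring
  have ht_eq : t = m * (1 + u) := by simp only [m, u]; field_simp; ring
  have hu₀ : 0 ≤ u := div_nonneg (by linarith) (by linarith)
  have hu₁ : u < 1 := by rw [div_lt_one (by linarith)]; linarith
  have hcore := two_mul_jsTerm_one_sub_one_add_le hu₀ hu₁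
  rw [hx_eq, ht_eq, jsTerm_mul, log_mul hm.ne' (by linarith), log_mul hm.ne' (by linarith),
    ← mul_add, show 1 - u + (1 + u) = 2 by ring]
  nlinarith

lemma monotoneOn_log_sub_log_div_sqrt_jsTerm {t : ℝ} (ht : 0 < t) :
    MonotoneOn (fun x => (log t - log ((x + t) / 2)) / √(jsTerm x t)) (Ioo 0 t) := by
  have hderiv : ∀ x ∈ Ioo 0 t, HasDerivAt (fun x => (log t - log ((x + t) / 2)) / √(jsTerm x t))
      ((-(x + t)⁻¹ * √(jsTerm x t) - (log t - log ((x + t) / 2)) *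
        ((log x - log ((x + t) / 2)) / 2 / (2 * √(jsTerm x t)))) / √(jsTerm x t) ^ 2) x := by
    intro x ⟨hx, hxt⟩
    have hψ : 0 < jsTerm x t := jsTerm_pos hx.le ht.le hxt.ne
    have hnum : HasDerivAt (fun y => log t - log ((y + t) / 2)) (-(x + t)⁻¹) x := by
      refine ((((hasDerivAt_id x).add_const t).div_const 2).log ?_).const_sub (log t)
        |>.congr_deriv ?_
      · simp only [id]; positivity
      · simp only [id]; field_simp
    exact hnum.div ((hasDerivAt_jsTerm_left hx.ne' (by linarith)).sqrt hψ.ne') (sqrt_pos.2 hψ).ne'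
  refine monotoneOn_of_deriv_nonneg (convex_Ioo 0 t)
    (fun x hx => (hderiv x hx).continuousAt.continuousWithinAt)
    (by rw [interior_Ioo]; exact fun x hx => (hderiv x hx).differentiableAt.differentiableWithinAt)
    (fun x hx => ?_)
  rw [interior_Ioo] at hx
  rw [(hderiv x hx).deriv]
  obtain ⟨hx, hxt⟩ := hx
  have hkey := four_mul_jsTerm_le hx hxt.le
  rw [← sq_sqrt (jsTerm_nonneg hx.le ht.le)] at hkey
  refine div_nonneg ?_ (sq_nonneg _)
  have hrw : -(x + t)⁻¹ * √(jsTerm x t) - (log t - log ((x + t) / 2)) *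
      ((log x - log ((x + t) / 2)) / 2 / (2 * √(jsTerm x t))) =
      ((x + t) * ((log ((x + t) / 2) - log x) * (log t - log ((x + t) / 2))) -
        4 * √(jsTerm x t) ^ 2) / (4 * √(jsTerm x t) * (x + t)) := by
    field_simp
    ring
  rw [hrw]
  exact div_nonneg (by linarith) (by positivity)

lemma sqrt_jsTerm_le_add_of_le {a b c : ℝ} (ha : 0 < a) (hab : a ≤ b) (hbc : b ≤ c) :
    √(jsTerm a c) ≤ √(jsTerm a b) + √(jsTerm b c) := by
  have hderiv : ∀ t, b < t → HasDerivAt (fun t => √(jsTerm b t) - √(jsTerm a t))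
      ((log t - log ((b + t) / 2)) / 2 / (2 * √(jsTerm b t)) -
        (log t - log ((a + t) / 2)) / 2 / (2 * √(jsTerm a t))) t := by
    intro t hbt
    have ht : 0 < t := by linarith
    exact ((hasDerivAt_jsTerm_right ht.ne' (by linarith)).sqrt
        (jsTerm_pos (by linarith) ht.le hbt.ne).ne').sub
      ((hasDerivAt_jsTerm_right ht.ne' (by linarith)).sqrt
        (jsTerm_pos ha.le ht.le (by linarith)).ne')
  have hmono : MonotoneOn (fun t => √(jsTerm b t) - √(jsTerm a t)) (Ici b) := by
    refine monotoneOn_of_deriv_nonneg (convex_Ici b) (by fun_prop)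
      (by
        rw [interior_Ici]
        exact fun t ht => (hderiv t ht).differentiableAt.differentiableWithinAt)
      (fun t ht => ?_)
    rw [interior_Ici, Set.mem_Ioi] at ht
    rw [(hderiv t ht).deriv]
    have hratio := monotoneOn_log_sub_log_div_sqrt_jsTerm (t := t) (by linarith)
      ⟨ha, by linarith⟩ ⟨by linarith, ht⟩ hab
    simp only at hratio
    have hdiv : ∀ x, (log t - log ((x + t) / 2)) / 2 / (2 * √(jsTerm x t)) =
        (log t - log ((x + t) / 2)) / √(jsTerm x t) / 4 := fun x => by
      rw [div_div, div_div]; ring_nf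
    rw [hdiv, hdiv]
    linarith
  have := hmono (Set.mem_Ici.2 le_rfl) hbc hbc
  simp only [jsTerm_self, sqrt_zero, zero_sub] at this
  linarith

lemma sqrt_jsTerm_le_add_of_pos {a b c : ℝ} (ha : 0 < a) (hb : 0 < b) (hc : 0 < c) :
    √(jsTerm a c) ≤ √(jsTerm a b) + √(jsTerm b c) := by
  wlog hac : a ≤ c generalizing a c
  · have := this hc ha (le_of_not_ge hac)
    rw [jsTerm_comm c a, jsTerm_comm c b, jsTerm_comm b a] at this
    linarith
  rcases le_or_gt b a with hba | hab
  · have h : jsTerm c a ≤ jsTerm c b :=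
      jsTerm_antitoneOn_right ⟨hb.le, hba.trans hac⟩ ⟨ha.le, hac⟩ hba
    rw [jsTerm_comm c a, jsTerm_comm c b] at h
    linarith [sqrt_le_sqrt h, sqrt_nonneg (jsTerm a b)]
  rcases le_or_gt c b with hcb | hbc
  · have h : jsTerm a c ≤ jsTerm a b := jsTerm_monotoneOn_right ha.le hac (hac.trans hcb) hcb
    linarith [sqrt_le_sqrt h, sqrt_nonneg (jsTerm b c)]
  exact sqrt_jsTerm_le_add_of_le ha hab.le hbc.le

lemma sqrt_jsTerm_le_add {a b c : ℝ} (ha : 0 ≤ a) (hb : 0 ≤ b) (hc : 0 ≤ c) :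
    √(jsTerm a c) ≤ √(jsTerm a b) + √(jsTerm b c) := by
  have hlim : ∀ x y : ℝ,
      Tendsto (fun ε => √(jsTerm (x + ε) (y + ε))) (𝓝[>] 0) (𝓝 √(jsTerm x y)) := by
    intro x y
    have h : Continuous fun ε : ℝ => √(jsTerm (x + ε) (y + ε)) := by fun_prop
    simpa using (h.tendsto 0).mono_left nhdsWithin_le_nhds
  exact le_of_tendsto_of_tendsto (hlim a c) ((hlim a b).add (hlim b c))
    (eventually_nhdsWithin_of_forall fun ε (hε : 0 < ε) =>
      sqrt_jsTerm_le_add_of_pos (by linarith) (by linarith) (by linarith))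

lemma jsTerm_eq_half_add {a b : ℝ} (ha : 0 ≤ a) (hb : 0 ≤ b) :
    jsTerm a b = (a * log (a / ((a + b) / 2)) + b * log (b / ((a + b) / 2))) / 2 := by
  have h : ∀ x, 0 ≤ x → x ≤ a + b →
      x * log (x / ((a + b) / 2)) = x * log x - x * log ((a + b) / 2) := fun x hx hxab => by
    rcases hx.eq_or_lt with rfl | hx
    · simp
    · rw [log_div hx.ne' (half_pos (hx.trans_le hxab)).ne']; ring
  rw [h a ha (by linarith), h b hb (by linarith), jsTerm, negMulLog, negMulLog, negMulLog]
  ring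

lemma KL_eq_sum_mul_log_div {X : Type*} [Fintype X] (p q : X → ℝ) :
    KL p q = ∑ x, p x * log (p x / q x) :=
  Finset.sum_congr rfl fun x _ => by split_ifs with h <;> simp [h]

lemma JSD_nonneg {X : Type*} [Fintype X] (p q : X → ℝ) : 0 ≤ JSD p q := sqrt_nonneg _

lemma JSD_eq_sqrt_sum_jsTerm {X : Type*} [Fintype X] {p q : X → ℝ} (hp : ∀ x, 0 ≤ p x)
    (hq : ∀ x, 0 ≤ q x) : JSD p q = √(∑ x, jsTerm (p x) (q x)) := by
  rw [JSD, KL_eq_sum_mul_log_div, KL_eq_sum_mul_log_div, mul_sum, mul_sum, ← sum_add_distrib]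
  congr 1
  refine sum_congr rfl fun x _ => ?_
  rw [jsTerm_eq_half_add (hp x) (hq x)]
  ring

lemma sqrt_sum_add_sq_le {ι : Type*} [Fintype ι] (f g : ι → ℝ) :
    √(∑ i, (f i + g i) ^ 2) ≤ √(∑ i, f i ^ 2) + √(∑ i, g i ^ 2) := by
  simpa [EuclideanSpace.norm_eq] using
    norm_add_le (WithLp.toLp 2 f : EuclideanSpace ℝ ι) (WithLp.toLp 2 g)

lemma JSD_triangle {X : Type*} [Fintype X] {p q r : X → ℝ} (hp : ∀ x, 0 ≤ p x)
    (hq : ∀ x, 0 ≤ q x) (hr : ∀ x, 0 ≤ r x) : JSD p r ≤ JSD p q + JSD q r := by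
  rw [JSD_eq_sqrt_sum_jsTerm hp hr, JSD_eq_sqrt_sum_jsTerm hp hq, JSD_eq_sqrt_sum_jsTerm hq hr]
  calc √(∑ x, jsTerm (p x) (r x))
      ≤ √(∑ x, (√(jsTerm (p x) (q x)) + √(jsTerm (q x) (r x))) ^ 2) :=
        sqrt_le_sqrt <| sum_le_sum fun x _ =>
          (sqrt_le_left (by positivity)).1 (sqrt_jsTerm_le_add (hp x) (hq x) (hr x))
    _ ≤ √(∑ x, √(jsTerm (p x) (q x)) ^ 2) + √(∑ x, √(jsTerm (q x) (r x)) ^ 2) :=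
        sqrt_sum_add_sq_le _ _
    _ = √(∑ x, jsTerm (p x) (q x)) + √(∑ x, jsTerm (q x) (r x)) := by
        simp_rw [sq_sqrt (jsTerm_nonneg (hp _) (hq _)), sq_sqrt (jsTerm_nonneg (hq _) (hr _))]

lemma mul_log_div_le_sum_mul_log_div {ι : Type*} {s : Finset ι} {f g : ι → ℝ}
    (hf : ∀ i ∈ s, 0 ≤ f i) (hg : ∀ i ∈ s, 0 ≤ g i) (hfg : ∀ i ∈ s, g i = 0 → f i = 0) :
    (∑ i ∈ s, f i) * log ((∑ i ∈ s, f i) / ∑ i ∈ s, g i) ≤ ∑ i ∈ s, f i * log (f i / g i) := by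
  have hcancel : ∀ i ∈ s, g i * (f i / g i) = f i := fun i hi => by
    rcases eq_or_ne (g i) 0 with h | h
    · simp [h, hfg i hi h]
    · exact mul_div_cancel₀ _ h
  rcases (sum_nonneg hg).eq_or_lt with hG | hG
  · have hg0 := (sum_eq_zero_iff_of_nonneg hg).1 hG.symm
    rw [sum_eq_zero fun i hi => hfg i hi (hg0 i hi), zero_mul]
    exact sum_nonneg fun i hi => by rw [hfg i hi (hg0 i hi), zero_mul]
  have h := convexOn_mul_log.map_centerMass_le hg hG
    fun i hi => Set.mem_Ici.2 (div_nonneg (hf i hi) (hg i hi))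
  simp only [centerMass, smul_eq_mul, Function.comp_apply, ← mul_assoc] at h
  have hrhs : ∑ i ∈ s, g i * (f i / g i) * log (f i / g i) = ∑ i ∈ s, f i * log (f i / g i) :=
    sum_congr rfl fun i hi => by rw [hcancel i hi]
  rw [hrhs, sum_congr rfl hcancel, inv_mul_eq_div] at h
  calc (∑ i ∈ s, f i) * log ((∑ i ∈ s, f i) / ∑ i ∈ s, g i)
      = (∑ i ∈ s, g i) * ((∑ i ∈ s, f i) / (∑ i ∈ s, g i) *
          log ((∑ i ∈ s, f i) / ∑ i ∈ s, g i)) := by field_simp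
    _ ≤ (∑ i ∈ s, g i) * ((∑ i ∈ s, g i)⁻¹ * ∑ i ∈ s, f i * log (f i / g i)) := by gcongr
    _ = ∑ i ∈ s, f i * log (f i / g i) := by field_simp

lemma jsTerm_sum_le {ι : Type*} (s : Finset ι) {a b : ι → ℝ} (ha : ∀ i ∈ s, 0 ≤ a i)
    (hb : ∀ i ∈ s, 0 ≤ b i) :
    jsTerm (∑ i ∈ s, a i) (∑ i ∈ s, b i) ≤ ∑ i ∈ s, jsTerm (a i) (b i) := by
  have hm : ∑ i ∈ s, (a i + b i) / 2 = (∑ i ∈ s, a i + ∑ i ∈ s, b i) / 2 := by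
    rw [← sum_div, sum_add_distrib]
  have hm₀ : ∀ i ∈ s, 0 ≤ (a i + b i) / 2 := fun i hi => by linarith [ha i hi, hb i hi]
  have hla := mul_log_div_le_sum_mul_log_div ha hm₀ fun i hi _ => by linarith [ha i hi, hb i hi]
  have hlb := mul_log_div_le_sum_mul_log_div hb hm₀ fun i hi _ => by linarith [ha i hi, hb i hi]
  rw [hm] at hla hlb
  rw [jsTerm_eq_half_add (sum_nonneg ha) (sum_nonneg hb),
    sum_congr rfl fun i hi => jsTerm_eq_half_add (ha i hi) (hb i hi), ← sum_div, sum_add_distrib]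
  linarith

lemma mulVec_apply_nonneg {Y J : Type*} [Fintype J] {A : Matrix Y J ℝ} (hA : ∀ y j, 0 ≤ A y j)
    {w : J → ℝ} (hw : ∀ j, 0 ≤ w j) (y : Y) : 0 ≤ (A *ᵥ w) y :=
  sum_nonneg fun j _ => mul_nonneg (hA y j) (hw j)

lemma mul_apply_nonneg {I J K : Type*} [Fintype J] {M : Matrix I J ℝ} {N : Matrix J K ℝ}
    (hM : ∀ i j, 0 ≤ M i j) (hN : ∀ j k, 0 ≤ N j k) (i : I) (k : K) : 0 ≤ (M * N) i k :=
  sum_nonneg fun j _ => mul_nonneg (hM i j) (hN j k)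

lemma JSD_mulVec_le {Y J : Type*} [Fintype Y] [Fintype J] [Nonempty J] {A B : Matrix Y J ℝ}
    (hA : ∀ y j, 0 ≤ A y j) (hB : ∀ y j, 0 ≤ B y j) {w : J → ℝ} (hw : ∀ j, 0 ≤ w j)
    (hw₁ : ∑ j, w j = 1) :
    JSD (A *ᵥ w) (B *ᵥ w) ≤
      univ.sup' univ_nonempty fun j => JSD (fun y => A y j) (fun y => B y j) := by
  set D := univ.sup' univ_nonempty fun j => JSD (fun y => A y j) (fun y => B y j)
  have hcol : ∀ j, ∑ y, jsTerm (A y j) (B y j) ≤ D ^ 2 := fun j => by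
    rw [← sq_sqrt (sum_nonneg fun y _ => jsTerm_nonneg (hA y j) (hB y j)),
      ← JSD_eq_sqrt_sum_jsTerm (hA · j) (hB · j)]
    exact pow_le_pow_left₀ (sqrt_nonneg _) (le_sup' (fun j => JSD (A · j) (B · j)) (mem_univ j)) 2
  have hmix : ∀ y, jsTerm ((A *ᵥ w) y) ((B *ᵥ w) y) ≤ ∑ j, w j * jsTerm (A y j) (B y j) :=
    fun y => by
      simpa only [mulVec_apply_eq_sum, mul_comm _ (w _), jsTerm_mul] using
        jsTerm_sum_le univ (fun j _ => mul_nonneg (hA y j) (hw j))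
          (fun j _ => mul_nonneg (hB y j) (hw j))
  have hD : 0 ≤ D := (JSD_nonneg _ _).trans
    (le_sup' (fun j => JSD (A · j) (B · j)) (mem_univ (Classical.arbitrary J)))
  rw [JSD_eq_sqrt_sum_jsTerm (mulVec_apply_nonneg hA hw) (mulVec_apply_nonneg hB hw),
    sqrt_le_left hD]
  calc ∑ y, jsTerm ((A *ᵥ w) y) ((B *ᵥ w) y)
      ≤ ∑ y, ∑ j, w j * jsTerm (A y j) (B y j) := sum_le_sum fun y _ => hmix y
    _ = ∑ j, w j * ∑ y, jsTerm (A y j) (B y j) := by rw [sum_comm]; simp_rw [mul_sum]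
    _ ≤ ∑ j, w j * D ^ 2 := sum_le_sum fun j _ => mul_le_mul_of_nonneg_left (hcol j) (hw j)
    _ = D ^ 2 := by rw [← sum_mul, hw₁, one_mul]

section Abstraction

variable {N M : Type*} [Fintype M] [DecidableEq N]

def absMatrix (σ : M → N) : Matrix N M ℝ := of fun j i => if σ i = j then 1 else 0

lemma card_fiber_pos {σ : M → N} (hσ : Function.Surjective σ) (j : N) :
    0 < (#{i | σ i = j} : ℝ) := by
  obtain ⟨i, hi⟩ := hσ j
  exact Nat.cast_pos.2 (card_pos.2 ⟨i, by simp [hi]⟩)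

lemma absMatrix_mul_transpose (σ : M → N) :
    absMatrix σ * (absMatrix σ)ᵀ = diagonal fun j => (#{i | σ i = j} : ℝ) := by
  ext j j'
  rcases eq_or_ne j j' with rfl | h
  · simp +contextual [absMatrix, mul_apply]
  · simp +contextual [absMatrix, mul_apply, h, Ne.symm h]

variable [Fintype N]

lemma IsAbsMatrix.exists_eq_absMatrix {α : Matrix N M ℝ} (hα : IsAbsMatrix α) :
    ∃ σ : M → N, Function.Surjective σ ∧ α = absMatrix σ := by
  obtain ⟨h01, hcol, hrow⟩ := hα
  choose σ hσ huniq using hcol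
  refine ⟨σ, fun j => ?_, ?_⟩
  · obtain ⟨i, hi⟩ := hrow j
    exact ⟨i, (huniq i j hi).symm⟩
  ext j i
  simp only [absMatrix, of_apply]
  split_ifs with h
  · exact h ▸ hσ i
  · exact (h01 j i).resolve_right fun h1 => h (huniq i j h1).symm

variable {σ : M → N}

lemma pinv_absMatrix_apply (hσ : Function.Surjective σ) (i : M) (j : N) :
    pinv (absMatrix σ) i j = if σ i = j then (#{i' | σ i' = j} : ℝ)⁻¹ else 0 := by
  have hinv : (absMatrix σ * (absMatrix σ)ᵀ)⁻¹ = diagonal fun j => (#{i | σ i = j} : ℝ)⁻¹ := by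
    refine inv_eq_right_inv ?_
    rw [absMatrix_mul_transpose, diagonal_mul_diagonal, ← diagonal_one]
    exact congrArg diagonal (funext fun j => mul_inv_cancel₀ (card_fiber_pos hσ j).ne')
  rw [pinv, hinv, mul_diagonal, transpose_apply, absMatrix, of_apply]
  split_ifs <;> simp

lemma pinv_absMatrix_mulVec_apply (hσ : Function.Surjective σ) (p : N → ℝ) (i : M) :
    (pinv (absMatrix σ) *ᵥ p) i = (#{i' | σ i' = σ i} : ℝ)⁻¹ * p (σ i) := by
  simp [mulVec_apply_eq_sum, pinv_absMatrix_apply hσ, ite_mul]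

lemma isColStoch_pinv_absMatrix (hσ : Function.Surjective σ) : IsColStoch (pinv (absMatrix σ)) := by
  refine ⟨fun i j => ?_, fun j => ?_⟩
  · rw [pinv_absMatrix_apply hσ]
    split_ifs <;> positivity
  · simp_rw [pinv_absMatrix_apply hσ]
    rw [sum_ite, sum_const_zero, add_zero, sum_const, nsmul_eq_mul,
      mul_inv_cancel₀ (card_fiber_pos hσ j).ne']

lemma sum_jsTerm_pinv_absMatrix_mulVec (hσ : Function.Surjective σ) (p q : N → ℝ) :
    ∑ i, jsTerm ((pinv (absMatrix σ) *ᵥ p) i) ((pinv (absMatrix σ) *ᵥ q) i) =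
      ∑ j, jsTerm (p j) (q j) := by
  simp_rw [pinv_absMatrix_mulVec_apply hσ, jsTerm_mul]
  rw [← sum_fiberwise univ σ]
  refine sum_congr rfl fun j _ => ?_
  rw [sum_congr rfl fun i hi => by rw [(mem_filter.1 hi).2], sum_const, nsmul_eq_mul,
    mul_inv_cancel_left₀ (card_fiber_pos hσ j).ne']

lemma JSD_pinv_absMatrix_mulVec (hσ : Function.Surjective σ) {p q : N → ℝ} (hp : ∀ j, 0 ≤ p j)
    (hq : ∀ j, 0 ≤ q j) :
    JSD (pinv (absMatrix σ) *ᵥ p) (pinv (absMatrix σ) *ᵥ q) = JSD p q := by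
  have hα := (isColStoch_pinv_absMatrix hσ).1
  rw [JSD_eq_sqrt_sum_jsTerm (mulVec_apply_nonneg hα hp) (mulVec_apply_nonneg hα hq),
    JSD_eq_sqrt_sum_jsTerm hp hq, sum_jsTerm_pinv_absMatrix_mulVec hσ]

end Abstraction

lemma IsAbsMatrix.isColStoch_pinv {N M : Type*} [Fintype N] [Fintype M] [DecidableEq N]
    {α : Matrix N M ℝ} (hα : IsAbsMatrix α) : IsColStoch (pinv α) := by
  obtain ⟨σ, hσ, rfl⟩ := hα.exists_eq_absMatrix
  exact isColStoch_pinv_absMatrix hσ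

section SupJSD

variable {Y X : Type*} [Fintype Y] [Fintype X] [Nonempty X]

lemma JSD_le_supJSD (A B : Matrix Y X ℝ) (x : X) :
    JSD (fun y => A y x) (fun y => B y x) ≤ supJSD A B :=
  le_sup' (fun x => JSD (A · x) (B · x)) (mem_univ x)

lemma supJSD_triangle {A B C : Matrix Y X ℝ} (hA : ∀ y x, 0 ≤ A y x) (hB : ∀ y x, 0 ≤ B y x)
    (hC : ∀ y x, 0 ≤ C y x) : supJSD A C ≤ supJSD A B + supJSD B C :=
  sup'_le _ _ fun x _ => (JSD_triangle (hA · x) (hB · x) (hC · x)).trans <|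
    add_le_add (JSD_le_supJSD A B x) (JSD_le_supJSD B C x)

lemma supJSD_mul_le {J : Type*} [Fintype J] [Nonempty J] {A B : Matrix Y J ℝ}
    (hA : ∀ y j, 0 ≤ A y j) (hB : ∀ y j, 0 ≤ B y j) {W : Matrix J X ℝ} (hW : IsColStoch W) :
    supJSD (A * W) (B * W) ≤ supJSD A B :=
  sup'_le _ _ fun x _ => JSD_mulVec_le hA hB (hW.1 · x) (hW.2 x)

lemma supJSD_pinv_mul {N : Type*} [Fintype N] [DecidableEq N] {α : Matrix N Y ℝ}
    (hα : IsAbsMatrix α) {C E : Matrix N X ℝ} (hC : ∀ j x, 0 ≤ C j x) (hE : ∀ j x, 0 ≤ E j x) :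
    supJSD (pinv α * C) (pinv α * E) = supJSD C E := by
  obtain ⟨σ, hσ, rfl⟩ := hα.exists_eq_absMatrix
  exact sup'_congr _ rfl fun x _ => JSD_pinv_absMatrix_mulVec hσ (hC · x) (hE · x)

end SupJSD

theorem isc_triangle_general {X X' X'' Y Y' Y'' : Type*}
    [Fintype X] [Fintype X'] [Nonempty X'] [Fintype X''] [Nonempty X'']
    [Fintype Y] [Fintype Y'] [Fintype Y'']
    [DecidableEq X'] [DecidableEq X''] [DecidableEq Y'] [DecidableEq Y'']
    (μ : Matrix Y X ℝ) (μ' : Matrix Y' X' ℝ) (μ'' : Matrix Y'' X'' ℝ)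
    (αX : Matrix X' X ℝ) (αY : Matrix Y' Y ℝ)
    (βX : Matrix X'' X' ℝ) (βY : Matrix Y'' Y' ℝ)
    (hμ : IsColStoch μ) (hμ' : IsColStoch μ') (hμ'' : IsColStoch μ'')
    (hαX : IsAbsMatrix αX) (hαY : IsAbsMatrix αY)
    (hβX : IsAbsMatrix βX) (hβY : IsAbsMatrix βY) :
    supJSD (μ * pinv αX * pinv βX) (pinv αY * pinv βY * μ'')
      ≤ supJSD (μ * pinv αX) (pinv αY * μ') + supJSD (μ' * pinv βX) (pinv βY * μ'') := by
  have hμαX := mul_apply_nonneg hμ.1 hαX.isColStoch_pinv.1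
  have hαYμ' := mul_apply_nonneg hαY.isColStoch_pinv.1 hμ'.1
  have hμ'βX := mul_apply_nonneg hμ'.1 hβX.isColStoch_pinv.1
  have hβYμ'' := mul_apply_nonneg hβY.isColStoch_pinv.1 hμ''.1
  rw [Matrix.mul_assoc (pinv αY)]
  calc supJSD (μ * pinv αX * pinv βX) (pinv αY * (pinv βY * μ''))
      ≤ supJSD (μ * pinv αX * pinv βX) (pinv αY * μ' * pinv βX) +
          supJSD (pinv αY * μ' * pinv βX) (pinv αY * (pinv βY * μ'')) :=
        supJSD_triangle (mul_apply_nonneg hμαX hβX.isColStoch_pinv.1)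
          (mul_apply_nonneg hαYμ' hβX.isColStoch_pinv.1)
          (mul_apply_nonneg hαY.isColStoch_pinv.1 hβYμ'')
    _ ≤ supJSD (μ * pinv αX) (pinv αY * μ') + supJSD (μ' * pinv βX) (pinv βY * μ'') :=
        add_le_add (supJSD_mul_le hμαX hαYμ' hβX.isColStoch_pinv)
          (by rw [Matrix.mul_assoc, supJSD_pinv_mul hαY hμ'βX hβYμ''])

theorem isc_triangle {X X' X'' Y Y' Y'' : Type*}
    [Fintype X] [Nonempty X] [Fintype X'] [Nonempty X'] [Fintype X''] [Nonempty X'']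
    [Fintype Y] [Nonempty Y] [Fintype Y'] [Nonempty Y'] [Fintype Y''] [Nonempty Y'']
    [DecidableEq X'] [DecidableEq X''] [DecidableEq Y'] [DecidableEq Y'']
    (μ : Matrix Y X ℝ) (μ' : Matrix Y' X' ℝ) (μ'' : Matrix Y'' X'' ℝ)
    (αX : Matrix X' X ℝ) (αY : Matrix Y' Y ℝ)
    (βX : Matrix X'' X' ℝ) (βY : Matrix Y'' Y' ℝ)
    (hμ : IsColStoch μ) (hμ' : IsColStoch μ') (hμ'' : IsColStoch μ'')
    (hαX : IsAbsMatrix αX) (hαY : IsAbsMatrix αY)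
    (hβX : IsAbsMatrix βX) (hβY : IsAbsMatrix βY) :
    supJSD (μ * pinv αX * pinv βX) (pinv αY * pinv βY * μ'')
      ≤ supJSD (μ * pinv αX) (pinv αY * μ') + supJSD (μ' * pinv βX) (pinv βY * μ'') :=
  isc_triangle_general μ μ' μ'' αX αY βX βY hμ hμ' hμ'' hαX hαY hβX hβY
end
end
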